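/- Let m and d be positive integers. The number of subgroups of ℤ × ℤ of index d that are contained in ℤ × mℤ equals σ(d/m), where σ(d/m) is defined to be 0 if m does not divide d. -/

import Mathlib

/-!
A subgroup `K` of finite index in `ℤ × ℤ` is spanned by the rows of a unique Hermite normal form
`[[a, b], [0, c]]` with `0 ≤ b < c`: here `aℤ` is the projection of `K` to the first factor and
`cℤ` its intersection with the second, so `[ℤ × ℤ : K] = a * c`. Hence `ℤ × ℤ` has
`∑_{c ∣ n} c = σ(n)` subgroups of index `n`. The injection `(x, y) ↦ (x, m y)` maps `ℤ × ℤ` onto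
`ℤ × mℤ`, which has index `m`, and multiplies indices by `m`; so the subgroups of index `d` inside
`ℤ × mℤ` correspond to the subgroups of `ℤ × ℤ` of index `d / m`, and there are none if `m ∤ d`.
-/

open AddSubgroup

theorem AddSubgroup.index_eq_relIndex_ker_mul_index_map {G G' : Type*} [AddCommGroup G]
    [AddGroup G'] (K : AddSubgroup G) {f : G →+ G'} (hf : Function.Surjective f) :
    K.index = K.relIndex f.ker * (K.map f).index := by
  rw [index_map, f.range_eq_top_of_surjective hf, index_top, mul_one, ← relIndex_sup_left,
    relIndex_mul_index le_sup_left]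

theorem AddSubgroup.index_eq_index_comap_inr_mul_index_map_fst (K : AddSubgroup (ℤ × ℤ)) :
    K.index =
      (K.comap (AddMonoidHom.inr ℤ ℤ)).index * (K.map (AddMonoidHom.fst ℤ ℤ)).index := by
  have : (AddMonoidHom.inr ℤ ℤ).range = (AddMonoidHom.fst ℤ ℤ).ker := by
    ext ⟨x, y⟩; simp [eq_comm, AddSubgroup.mem_prod]
  rw [index_comap, this,
    K.index_eq_relIndex_ker_mul_index_map (f := AddMonoidHom.fst ℤ ℤ) Prod.fst_surjective]

theorem AddSubgroup.eq_zmultiples_index (S : AddSubgroup ℤ) : S = zmultiples (S.index : ℤ) := by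
  obtain ⟨a, rfl⟩ := Int.subgroup_cyclic S
  rw [← zmultiples_eq_closure, Int.index_zmultiples, Int.zmultiples_natAbs]

def hermiteLattice (a : ℕ) (b : ℤ) (c : ℕ) : AddSubgroup (ℤ × ℤ) :=
  zmultiples ((a : ℤ), b) ⊔ zmultiples (0, (c : ℤ))

theorem mem_hermiteLattice {a : ℕ} {b : ℤ} {c : ℕ} {p : ℤ × ℤ} :
    p ∈ hermiteLattice a b c ↔ ∃ s t : ℤ, p = (s * a, s * b + t * c) := by
  simp only [hermiteLattice, mem_sup, mem_zmultiples_iff]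
  constructor
  · rintro ⟨_, ⟨s, rfl⟩, _, ⟨t, rfl⟩, rfl⟩
    exact ⟨s, t, by simp⟩
  · rintro ⟨s, t, rfl⟩
    exact ⟨_, ⟨s, rfl⟩, _, ⟨t, rfl⟩, by simp⟩

theorem map_fst_hermiteLattice (a : ℕ) (b : ℤ) (c : ℕ) :
    (hermiteLattice a b c).map (AddMonoidHom.fst ℤ ℤ) = zmultiples (a : ℤ) := by
  ext x
  simp only [mem_map, mem_hermiteLattice, mem_zmultiples_iff]
  constructor
  · rintro ⟨_, ⟨s, t, rfl⟩, rfl⟩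
    exact ⟨s, by simp⟩
  · rintro ⟨s, rfl⟩
    exact ⟨_, ⟨s, 0, rfl⟩, by simp⟩

theorem comap_inr_hermiteLattice {a : ℕ} (ha : a ≠ 0) (b : ℤ) (c : ℕ) :
    (hermiteLattice a b c).comap (AddMonoidHom.inr ℤ ℤ) = zmultiples (c : ℤ) := by
  ext x
  simp only [mem_comap, AddMonoidHom.inr_apply, mem_hermiteLattice, mem_zmultiples_iff,
    Prod.mk.injEq]
  constructor
  · rintro ⟨s, t, hs, rfl⟩
    obtain rfl : s = 0 := by simpa [ha] using hs.symm
    exact ⟨t, by simp⟩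
  · rintro ⟨t, rfl⟩
    exact ⟨0, t, by simp⟩

theorem index_hermiteLattice {a : ℕ} (ha : a ≠ 0) (b : ℤ) (c : ℕ) :
    (hermiteLattice a b c).index = c * a := by
  rw [index_eq_index_comap_inr_mul_index_map_fst, comap_inr_hermiteLattice ha,
    map_fst_hermiteLattice, Int.index_zmultiples, Int.index_zmultiples, Int.natAbs_natCast,
    Int.natAbs_natCast]

theorem mk_mem_hermiteLattice_iff {a : ℕ} (ha : a ≠ 0) {b : ℤ} {c : ℕ} {x : ℤ} :
    ((a : ℤ), x) ∈ hermiteLattice a b c ↔ (c : ℤ) ∣ x - b := by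
  simp only [mem_hermiteLattice, Prod.mk.injEq]
  constructor
  · rintro ⟨s, t, hs, rfl⟩
    obtain rfl : s = 1 :=
      mul_right_cancel₀ (Int.natCast_ne_zero.2 ha) (hs.symm.trans (one_mul _).symm)
    exact ⟨t, by ring⟩
  · rintro ⟨t, ht⟩
    exact ⟨1, t, by ring, by linarith⟩

theorem eq_of_hermiteLattice_eq {a a' b b' c c' : ℕ} (ha : a ≠ 0) (ha' : a' ≠ 0) (hb : b < c)
    (hb' : b' < c') (h : hermiteLattice a b c = hermiteLattice a' b' c') :
    a = a' ∧ b = b' ∧ c = c' := by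
  have hac := congrArg (fun K => (K.map (AddMonoidHom.fst ℤ ℤ)).index) h
  have hcc := congrArg (fun K => (K.comap (AddMonoidHom.inr ℤ ℤ)).index) h
  simp only [map_fst_hermiteLattice, comap_inr_hermiteLattice ha, comap_inr_hermiteLattice ha',
    Int.index_zmultiples, Int.natAbs_natCast] at hac hcc
  subst hac hcc
  have hdvd : (c : ℤ) ∣ b - b' :=
    (mk_mem_hermiteLattice_iff ha).1 (h ▸ (mk_mem_hermiteLattice_iff ha).2 (by simp))
  refine ⟨rfl, ?_, rfl⟩
  have := Int.eq_zero_of_dvd_of_natAbs_lt_natAbs hdvd (by omega)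
  omega

theorem exists_eq_hermiteLattice {K : AddSubgroup (ℤ × ℤ)} (hK : K.index ≠ 0) :
    ∃ a b c : ℕ, a ≠ 0 ∧ b < c ∧ K = hermiteLattice a b c := by
  set a := (K.map (AddMonoidHom.fst ℤ ℤ)).index
  set c := (K.comap (AddMonoidHom.inr ℤ ℤ)).index
  have hca : K.index = c * a := K.index_eq_index_comap_inr_mul_index_map_fst
  have hc : 0 < c := Nat.pos_of_ne_zero (left_ne_zero_of_mul (hca ▸ hK))
  have hfst : ∀ x : ℤ, x ∈ K.map (AddMonoidHom.fst ℤ ℤ) ↔ (a : ℤ) ∣ x := fun x => by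
    rw [← Int.mem_zmultiples_iff, ← eq_zmultiples_index]
  have hsnd : ∀ y : ℤ, ((0 : ℤ), y) ∈ K ↔ (c : ℤ) ∣ y := fun y => by
    rw [← Int.mem_zmultiples_iff, ← eq_zmultiples_index]; rfl
  obtain ⟨p, hpK, hpa⟩ := (hfst a).2 dvd_rfl
  set b := (p.2 % c).toNat
  have hb : (b : ℤ) = p.2 % c := Int.toNat_of_nonneg (Int.emod_nonneg _ (by omega))
  have hab : ((a : ℤ), (b : ℤ)) ∈ K := by
    have hc' : ((0 : ℤ), (c : ℤ)) ∈ K := (hsnd c).2 dvd_rfl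
    convert K.sub_mem hpK (K.zsmul_mem hc' (p.2 / c)) using 1
    ext
    · simpa using hpa.symm
    · simp [hb, Int.emod_def, mul_comm]
  have hbc : p.2 % c < c := Int.emod_lt_of_pos _ (by omega)
  refine ⟨a, b, c, right_ne_zero_of_mul (hca ▸ hK), by omega, le_antisymm ?_ ?_⟩
  · intro q hq
    obtain ⟨s, hs⟩ := (hfst q.1).1 ⟨q, hq, rfl⟩
    obtain ⟨t, ht⟩ : (c : ℤ) ∣ q.2 - s * b := by
      refine (hsnd _).1 ?_
      convert K.sub_mem hq (K.zsmul_mem hab s) using 1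
      ext <;> simp [hs, mul_comm]
    exact mem_hermiteLattice.2 ⟨s, t, by ext <;> simp only [hs] <;> linarith⟩
  · exact sup_le (zmultiples_le.2 hab) (zmultiples_le.2 ((hsnd c).2 dvd_rfl))

open ArithmeticFunction ArithmeticFunction.sigma in
theorem card_addSubgroup_index_eq_sigma {n : ℕ} (hn : n ≠ 0) :
    Nat.card {K : AddSubgroup (ℤ × ℤ) // K.index = n} = σ 1 n := by
  have hdiv {c : ℕ} (hc : c ∈ n.divisors) : n / c ≠ 0 :=
    (Nat.div_ne_zero_iff_of_dvd (Nat.dvd_of_mem_divisors hc)).2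
      ⟨hn, (Nat.pos_of_mem_divisors hc).ne'⟩
  let F : (Σ c : n.divisors, Fin c) → {K : AddSubgroup (ℤ × ℤ) // K.index = n} := fun x =>
    ⟨hermiteLattice (n / x.1) x.2 x.1, by
      rw [index_hermiteLattice (hdiv x.1.2), Nat.mul_div_cancel' (Nat.dvd_of_mem_divisors x.1.2)]⟩
  have hF : Function.Bijective F := by
    constructor
    · rintro ⟨⟨c, hc⟩, b⟩ ⟨⟨c', hc'⟩, b'⟩ h
      obtain ⟨-, hbb, rfl⟩ :=
        eq_of_hermiteLattice_eq (hdiv hc) (hdiv hc') b.2 b'.2 (congrArg Subtype.val h)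
      obtain rfl : b = b' := Fin.ext hbb
      rfl
    · rintro ⟨K, hK⟩
      obtain ⟨a, b, c, ha, hbc, rfl⟩ := exists_eq_hermiteLattice (hK ▸ hn)
      rw [index_hermiteLattice ha] at hK
      have hc : c ∈ n.divisors := Nat.mem_divisors.2 ⟨⟨a, hK.symm⟩, hn⟩
      refine ⟨⟨⟨c, hc⟩, ⟨b, hbc⟩⟩, Subtype.ext ?_⟩
      simp [F, ← hK, Nat.mul_div_cancel_left a (Nat.pos_of_mem_divisors hc)]
  rw [← Nat.card_eq_of_bijective F hF, Nat.card_sigma, sigma_one_apply]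
  simp only [Nat.card_eq_fintype_card, Fintype.card_fin]
  exact Finset.sum_coe_sort n.divisors id

theorem card_addSubgroup_le_range_index_eq {G G' : Type*} [AddGroup G] [AddGroup G']
    {f : G →+ G'} (hf : Function.Injective f) (d : ℕ) :
    Nat.card {L : AddSubgroup G' // L.index = d ∧ L ≤ f.range} =
      Nat.card {K : AddSubgroup G // K.index * f.range.index = d} :=
  Nat.card_congr
    { toFun := fun L => ⟨L.1.comap f, by
        rw [← index_map_of_injective _ hf, map_comap_eq_self L.2.2, L.2.1]⟩
      invFun := fun K => ⟨K.1.map f, by rw [index_map_of_injective _ hf, K.2], map_le_range _ _⟩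
      left_inv := fun L => Subtype.ext (map_comap_eq_self L.2.2)
      right_inv := fun K => Subtype.ext (comap_map_eq_self_of_injective hf K) }

/-- The number of subgroups of `ℤ × ℤ` of index `d` contained in `ℤ × mℤ` equals `σ(d / m)`,
which is `0` if `m ∤ d`. -/
theorem stmt4 (m d : ℕ) (hm : 0 < m) (hd : 0 < d) :
    Nat.card {L : AddSubgroup (ℤ × ℤ) // L.index = d ∧
        L ≤ (⊤ : AddSubgroup ℤ).prod (AddSubgroup.zmultiples (m : ℤ))}
      = if m ∣ d then ∑ k ∈ (d / m).divisors, k else 0 := by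
  set ψ := (AddMonoidHom.id ℤ).prodMap (zmultiplesHom ℤ (m : ℤ))
  have hψ : Function.Injective ψ :=
    Function.injective_id.prodMap fun x y h => mul_right_cancel₀ (by omega) h
  have hrange : ψ.range = (⊤ : AddSubgroup ℤ).prod (zmultiples (m : ℤ)) := by
    rw [AddMonoidHom.range_prodMap, AddMonoidHom.range_eq_top.2 Function.surjective_id,
      range_zmultiplesHom]
  rw [← hrange, card_addSubgroup_le_range_index_eq hψ, hrange, index_prod, index_top,
    Int.index_zmultiples, Int.natAbs_natCast, one_mul]
  split_ifs with hmd
  · obtain ⟨n, rfl⟩ := hmd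
    rw [Nat.mul_div_cancel_left n hm, ← ArithmeticFunction.sigma_one_apply,
      ← card_addSubgroup_index_eq_sigma (by rintro rfl; simp at hd)]
    exact Nat.card_congr <| Equiv.subtypeEquivRight fun K => by
      rw [mul_comm]; exact Nat.mul_left_cancel_iff hm
  · have : IsEmpty {K : AddSubgroup (ℤ × ℤ) // K.index * m = d} :=
      ⟨fun K => hmd ⟨K.1.index, by rw [mul_comm]; exact K.2.symm⟩⟩
    exact Nat.card_of_isEmpty
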